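/- Let A be a real matrix. Every vector v in the row span of A can be written as a finite nonnegative linear combination of circuits of A each of which is conformal to v (i.e., each circuit r in the decomposition satisfies sign(r_i) = sign(v_i) for every index i in the support of r). -/

import Mathlib

/-- The row span of a matrix. -/
def rowSpan {d s : ℕ} (A : Matrix (Fin d) (Fin s) ℝ) : Submodule ℝ (Fin s → ℝ) :=
  Submodule.span ℝ (Set.range fun k => A k)

/-- A circuit of a real matrix `A`: a nonzero element of the row span of `A`
with inclusion-minimal support. -/
def IsCircuit {d s : ℕ} (A : Matrix (Fin d) (Fin s) ℝ) (r : Fin s → ℝ) : Prop :=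
  r ∈ rowSpan A ∧ r ≠ 0 ∧
    ∀ w ∈ rowSpan A, w ≠ 0 → {i | w i ≠ 0} ⊆ {i | r i ≠ 0} →
      {i | w i ≠ 0} = {i | r i ≠ 0}

/-!
Given a nonzero `u` in the row span and a row-span vector `w` whose support lies strictly
inside that of `u`, subtracting the largest multiple `t • w` that keeps `u - t • w` conformal
to `u` kills a coordinate of `u`. Iterating this from `v` reaches a conformal vector of
minimal support, i.e. a circuit `r`; subtracting the largest conformal multiple of `r` from
`v` shrinks the support, and induction on the size of the support yields the decomposition.
-/

open Function

/-- `r` is conformal to `v`, with `sign (r i) = sign (v i)` written as `0 < r i * v i`. -/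
def IsConformalTo {ι 𝕜 : Type*} [Mul 𝕜] [Zero 𝕜] [LT 𝕜] (r v : ι → 𝕜) : Prop :=
  ∀ i, r i ≠ 0 → 0 < r i * v i

namespace IsConformalTo

variable {ι 𝕜 : Type*}

theorem ne_zero [MulZeroClass 𝕜] [Preorder 𝕜] {r v : ι → 𝕜} (h : IsConformalTo r v) {i : ι}
    (hi : r i ≠ 0) : v i ≠ 0 := by
  intro hv
  simpa [hv] using h i hi

theorem support_subset [MulZeroClass 𝕜] [Preorder 𝕜] {r v : ι → 𝕜} (h : IsConformalTo r v) :
    support r ⊆ support v :=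
  fun _ hi => h.ne_zero hi

variable [Field 𝕜] [LinearOrder 𝕜] [IsStrictOrderedRing 𝕜]

theorem refl (v : ι → 𝕜) : IsConformalTo v v := fun _ hi => mul_self_pos.mpr hi

theorem trans {r u v : ι → 𝕜} (hru : IsConformalTo r u) (huv : IsConformalTo u v) :
    IsConformalTo r v := by
  intro i hi
  have hui := hru.ne_zero hi
  have h := mul_pos (hru i hi) (huv i hui)
  rw [show r i * u i * (u i * v i) = r i * v i * (u i * u i) by ring] at h
  exact pos_of_mul_pos_left h (mul_self_nonneg _)

theorem real_sign_eq {r v : ι → ℝ} (h : IsConformalTo r v) {i : ι} (hi : r i ≠ 0) :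
    Real.sign (r i) = Real.sign (v i) := by
  rcases mul_pos_iff.mp (h i hi) with ⟨hr, hv⟩ | ⟨hr, hv⟩
  · rw [Real.sign_of_pos hr, Real.sign_of_pos hv]
  · rw [Real.sign_of_neg hr, Real.sign_of_neg hv]

end IsConformalTo

section Elimination

variable {ι 𝕜 : Type*} [Finite ι] [Field 𝕜] [LinearOrder 𝕜] [IsStrictOrderedRing 𝕜]

/-- `t` is the least ratio `u i / w i` over the coordinates where `u` and `w` have the same
sign; it is attained at some `j`, where `u - t • w` vanishes. -/
theorem exists_pos_isConformalTo_sub_smul {u w : ι → 𝕜} (hsub : support w ⊆ support u)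
    (hpos : ∃ i, 0 < u i * w i) :
    ∃ t : 𝕜, 0 < t ∧ IsConformalTo (u - t • w) u ∧ support (u - t • w) ⊂ support u := by
  obtain ⟨j, hj, hmin⟩ := Set.exists_min_image {i | 0 < u i * w i} (fun i => u i / w i)
    (Set.toFinite _) hpos
  have hj : 0 < u j * w j := hj
  have hwj : w j ≠ 0 := right_ne_zero_of_mul hj.ne'
  set t := u j / w j
  have ht : 0 < t := by
    rw [show t = u j * w j / (w j * w j) from (mul_div_mul_right _ _ hwj).symm]
    exact div_pos hj (mul_self_pos.mpr hwj)
  have hnonneg : ∀ i, 0 ≤ (u i - t * w i) * u i := by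
    intro i
    by_cases hi : 0 < u i * w i
    · have hwi : w i ≠ 0 := right_ne_zero_of_mul hi.ne'
      rw [show (u i - t * w i) * u i = u i * w i * (u i / w i - t) by field_simp]
      exact mul_nonneg hi.le (sub_nonneg.mpr (hmin i hi))
    · nlinarith [mul_self_nonneg (u i)]
  have hconf : IsConformalTo (u - t • w) u := by
    intro i hi
    have hui : u i ≠ 0 := fun hu => hi (by
      have hw : w i = 0 := by_contra fun hw => hsub hw hu
      simp [hu, hw])
    exact (hnonneg i).lt_of_ne' (mul_ne_zero hi hui)
  refine ⟨t, ht, hconf, hconf.support_subset.ssubset_of_ne fun heq => ?_⟩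
  have hj0 : (u - t • w) j = 0 := by
    show u j - t * w j = 0
    rw [div_mul_cancel₀ _ hwj, sub_self]
  exact (show j ∈ support (u - t • w) from heq ▸ left_ne_zero_of_mul hj.ne') hj0

theorem exists_isConformalTo_sub_smul {u w : ι → 𝕜} (hsub : support w ⊆ support u)
    (hw : w ≠ 0) :
    ∃ t : 𝕜, IsConformalTo (u - t • w) u ∧ support (u - t • w) ⊂ support u := by
  obtain ⟨i, hwi⟩ := Function.ne_iff.mp hw
  have hui : u i ≠ 0 := hsub hwi
  rcases (mul_ne_zero hui hwi).lt_or_gt with hneg | hpos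
  · obtain ⟨t, -, h⟩ := exists_pos_isConformalTo_sub_smul (w := -w) (by simpa using hsub)
      ⟨i, by simpa using hneg⟩
    exact ⟨-t, by simpa using h⟩
  · obtain ⟨t, -, h⟩ := exists_pos_isConformalTo_sub_smul hsub ⟨i, hpos⟩
    exact ⟨t, h⟩

end Elimination

section Circuits

variable {d s : ℕ}

theorem exists_isCircuit_isConformalTo (A : Matrix (Fin d) (Fin s) ℝ) {u : Fin s → ℝ}
    (hu : u ∈ rowSpan A) (hu0 : u ≠ 0) : ∃ r, IsCircuit A r ∧ IsConformalTo r u := by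
  induction h : (support u).ncard using Nat.strong_induction_on generalizing u with
  | _ n ih =>
  by_cases hcirc : IsCircuit A u
  · exact ⟨u, hcirc, .refl u⟩
  have hnotmin : ¬ ∀ w ∈ rowSpan A, w ≠ 0 → support w ⊆ support u → support w = support u :=
    fun hmin => hcirc ⟨hu, hu0, hmin⟩
  push Not at hnotmin
  obtain ⟨w, hw, hw0, hsub, hne⟩ := hnotmin
  obtain ⟨t, hconf, hlt⟩ := exists_isConformalTo_sub_smul hsub hw0
  have hne0 : u - t • w ≠ 0 := fun h0 => hne <| hsub.antisymm <| by
    rw [sub_eq_zero.mp h0]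
    exact support_const_smul_subset t w
  obtain ⟨r, hr, hru⟩ :=
    ih _ (h ▸ Set.ncard_lt_ncard hlt) (sub_mem hu ((rowSpan A).smul_mem t hw)) hne0 rfl
  exact ⟨r, hr, hru.trans hconf⟩

theorem exists_sum_isCircuit_isConformalTo (A : Matrix (Fin d) (Fin s) ℝ) {v : Fin s → ℝ}
    (hv : v ∈ rowSpan A) :
    ∃ (N : ℕ) (c : Fin N → ℝ) (r : Fin N → (Fin s → ℝ)),
      (∀ k, 0 ≤ c k) ∧ (∀ k, IsCircuit A (r k)) ∧ (∀ k, IsConformalTo (r k) v) ∧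
      v = ∑ k, c k • r k := by
  induction h : (support v).ncard using Nat.strong_induction_on generalizing v with
  | _ n ih =>
  by_cases hv0 : v = 0
  · exact ⟨0, Fin.elim0, Fin.elim0, nofun, nofun, nofun, by simp [hv0]⟩
  obtain ⟨r, hr, hrv⟩ := exists_isCircuit_isConformalTo A hv hv0
  obtain ⟨i, hri⟩ := Function.ne_iff.mp hr.2.1
  obtain ⟨t, ht, hconf, hlt⟩ :=
    exists_pos_isConformalTo_sub_smul hrv.support_subset ⟨i, mul_comm (r i) (v i) ▸ hrv i hri⟩
  obtain ⟨N, c, rs, hc, hrs, hrsv, hsum⟩ :=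
    ih _ (h ▸ Set.ncard_lt_ncard hlt) (sub_mem hv ((rowSpan A).smul_mem t hr.1)) rfl
  refine ⟨N + 1, Fin.cons t c, Fin.cons r rs, ?_, ?_, ?_, ?_⟩
  · exact Fin.forall_fin_succ.mpr ⟨ht.le, hc⟩
  · exact Fin.forall_fin_succ.mpr ⟨hr, hrs⟩
  · exact Fin.forall_fin_succ.mpr ⟨hrv, fun k => (hrsv k).trans hconf⟩
  · rw [Fin.sum_univ_succ, Fin.cons_zero, Fin.cons_zero]
    simp only [Fin.cons_succ, ← hsum, add_sub_cancel]

end Circuits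

/-- every vector in the row span of `A` is a finite nonnegative
linear combination of circuits of `A` conformal to it. -/
theorem stmt3 {d s : ℕ} (A : Matrix (Fin d) (Fin s) ℝ) (v : Fin s → ℝ)
    (hv : v ∈ rowSpan A) :
    ∃ (N : ℕ) (c : Fin N → ℝ) (r : Fin N → (Fin s → ℝ)),
      (∀ k, 0 ≤ c k) ∧ (∀ k, IsCircuit A (r k)) ∧
      (∀ k i, r k i ≠ 0 → Real.sign (r k i) = Real.sign (v i)) ∧
      v = ∑ k, c k • r k := by
  obtain ⟨N, c, r, hc, hr, hconf, hsum⟩ := exists_sum_isCircuit_isConformalTo A hv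
  exact ⟨N, c, r, hc, hr, fun k _ hi => (hconf k).real_sign_eq hi, hsum⟩
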